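/- The van der Corput sequence in base 2 (x_n = g_2(n) for n ≥ 1, where g_2 reverses the binary digits of n across the radix point) has the property that for every N ≥ 2 the point set {x_1,...,x_N} has at most two distinct gap lengths between neighboring elements. -/

import Mathlib

/-!
With `2 ^ m ≤ N + 1 < 2 ^ (m + 1)`, the points `g₂(1), …, g₂(N)` are distinct multiples of
`2⁻¹ ^ (m + 1)`, because on `[0, 2 ^ M)` the map `n ↦ 2 ^ M * g₂(n)` reverses the lowest `M`
binary digits of `n`.
The same bijection shows that every nonzero multiple of `2⁻¹ ^ m` in `[0, 1)` is among them.
Two neighbours `a / 2 ^ (m + 1) < b / 2 ^ (m + 1)` therefore have no even numerator strictly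
between `a` and `b`, so `b - a ∈ {1, 2}`.
-/

open scoped Classical

/-- The van der Corput radical-inverse function in base 2: for
`n = a_0 + a_1·2 + ⋯ + a_k·2^k`, `g₂(n) = a_0/2 + a_1/4 + ⋯ + a_k/2^{k+1}`. -/
noncomputable def g2 (n : ℕ) : ℝ :=
  ∑ i ∈ Finset.range (n + 1), (if Nat.testBit n i then (1 : ℝ) else 0) / 2 ^ (i + 1)

open Finset

lemma sum_range_binaryDigits_eq {n K M : ℕ} (hK : n < 2 ^ K) (hKM : K ≤ M) :
    ∑ i ∈ range M, (if n.testBit i then (1 : ℝ) else 0) / 2 ^ (i + 1) =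
      ∑ i ∈ range K, (if n.testBit i then (1 : ℝ) else 0) / 2 ^ (i + 1) := by
  refine (sum_subset (range_subset_range.2 hKM) fun i _ hi ↦ ?_).symm
  rw [Nat.testBit_eq_false_of_lt
    (hK.trans_le (Nat.pow_le_pow_right two_pos (by simpa using hi)))]
  simp

lemma g2_eq_sum_range {n M : ℕ} (h : n < 2 ^ M) :
    g2 n = ∑ i ∈ range M, (if n.testBit i then (1 : ℝ) else 0) / 2 ^ (i + 1) := by
  rcases le_total M (n + 1) with hM | hM
  · exact sum_range_binaryDigits_eq h hM
  · have hn : n < 2 ^ (n + 1) :=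
      Nat.lt_two_pow_self.trans (Nat.pow_lt_pow_right one_lt_two n.lt_succ_self)
    exact (sum_range_binaryDigits_eq hn hM).symm

@[simp] lemma g2_zero : g2 0 = 0 := by simp [g2]

lemma g2_eq (n : ℕ) : g2 n = ((n % 2 : ℕ) + g2 (n / 2)) / 2 := by
  rw [g2, sum_range_succ',
    g2_eq_sum_range (M := n) ((Nat.div_le_self n 2).trans_lt Nat.lt_two_pow_self)]
  simp only [Nat.testBit_succ, Nat.testBit_zero, add_div, sum_div, div_div, pow_succ]
  rcases Nat.mod_two_eq_zero_or_one n with h | h <;> simp [h, add_comm]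

def reverseBits : ℕ → ℕ → ℕ
  | 0, _ => 0
  | m + 1, n => 2 ^ m * (n % 2) + reverseBits m (n / 2)

lemma reverseBits_lt (m n : ℕ) : reverseBits m n < 2 ^ m := by
  induction m generalizing n with
  | zero => simp [reverseBits]
  | succ m ih =>
    have := ih (n / 2)
    rcases Nat.mod_two_eq_zero_or_one n with h | h <;> simp [reverseBits, h, pow_succ] <;> omega

lemma g2_eq_reverseBits_div {m n : ℕ} (h : n < 2 ^ m) : g2 n = reverseBits m n / 2 ^ m := by
  induction m generalizing n with
  | zero => simp_all [reverseBits]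
  | succ m ih =>
    rw [g2_eq, ih (by omega), reverseBits]
    push_cast
    field_simp
    ring

lemma exists_reverseBits_eq {m k : ℕ} (hk : k < 2 ^ m) : ∃ n < 2 ^ m, reverseBits m n = k := by
  induction m generalizing k with
  | zero => exact ⟨0, by simp_all [reverseBits]⟩
  | succ m ih =>
    obtain ⟨n, hn, hrev⟩ := ih (Nat.mod_lt k (by positivity))
    have hdiv : k / 2 ^ m < 2 := Nat.div_lt_of_lt_mul (by rwa [← pow_succ])
    refine ⟨2 * n + k / 2 ^ m, by omega, ?_⟩
    rw [reverseBits, Nat.mul_add_mod_self_left, Nat.mod_eq_of_lt hdiv,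
      Nat.mul_add_div two_pos, Nat.div_eq_of_lt hdiv, add_zero, hrev]
    exact Nat.div_add_mod k (2 ^ m)

lemma reverseBits_injOn (m : ℕ) : Set.InjOn (reverseBits m) (range (2 ^ m)) :=
  injOn_of_surjOn_of_card_le _ (fun n _ ↦ by simpa using reverseBits_lt m n)
    (fun k hk ↦ by simpa using exists_reverseBits_eq (mem_range.1 hk)) le_rfl

lemma g2_injective : Function.Injective g2 := by
  intro a b hab
  have ha : a < 2 ^ (a + b) :=
    Nat.lt_two_pow_self.trans_le (Nat.pow_le_pow_right two_pos (by omega))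
  have hb : b < 2 ^ (a + b) :=
    Nat.lt_two_pow_self.trans_le (Nat.pow_le_pow_right two_pos (by omega))
  rw [g2_eq_reverseBits_div ha, g2_eq_reverseBits_div hb] at hab
  refine reverseBits_injOn _ (by simpa using ha) (by simpa using hb) ?_
  exact_mod_cast (div_left_inj' (by positivity)).1 hab

lemma exists_g2_eq_div_two_pow {m k : ℕ} (hk : k < 2 ^ m) : ∃ n < 2 ^ m, g2 n = k / 2 ^ m := by
  obtain ⟨n, hn, rfl⟩ := exists_reverseBits_eq hk
  exact ⟨n, hn, g2_eq_reverseBits_div hn⟩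

theorem Monotone.ne_of_lt_of_lt_fin {α : Type*} [Preorder α] {N : ℕ} {f : Fin N → α}
    (hf : Monotone f) {i j : Fin N} (hij : (j : ℕ) = i + 1) {x : α} (h1 : f i < x)
    (h2 : x < f j) (k : Fin N) : f k ≠ x := by
  rintro rfl
  have := hf.reflect_lt h1
  have := hf.reflect_lt h2
  omega

theorem g2_sub_mem_of_forall_notMem_Ioo {m n n' : ℕ} (hn : n < 2 ^ (m + 1))
    (hn' : n' < 2 ^ (m + 1)) (hlt : g2 n < g2 n')
    (hgap : ∀ l, 0 < l → l < 2 ^ m → g2 l ∉ Set.Ioo (g2 n) (g2 n')) :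
    g2 n' - g2 n ∈ ({1 / 2 ^ (m + 1), 2 / 2 ^ (m + 1)} : Set ℝ) := by
  have hb := reverseBits_lt (m + 1) n'
  rw [g2_eq_reverseBits_div hn, g2_eq_reverseBits_div hn'] at hlt hgap ⊢
  generalize reverseBits (m + 1) n = a at hlt hgap ⊢
  generalize reverseBits (m + 1) n' = b at hb hlt hgap ⊢
  have hab : a < b := by exact_mod_cast (div_lt_div_iff_of_pos_right (by positivity)).1 hlt
  have hba : b ≤ a + 2 := by
    by_contra! hba
    obtain ⟨l, hl, hgl⟩ := exists_g2_eq_div_two_pow (m := m) (k := a / 2 + 1) (by omega)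
    have hgl' : g2 l = ((2 * (a / 2 + 1) : ℕ) : ℝ) / 2 ^ (m + 1) := by
      rw [hgl, pow_succ]
      push_cast
      field_simp
    refine hgap l (Nat.pos_of_ne_zero ?_) hl ⟨?_, ?_⟩
    · rintro rfl
      have : (0 : ℝ) < ((a / 2 + 1 : ℕ) : ℝ) / 2 ^ m := by positivity
      simp_all
    · rw [hgl']; gcongr; exact_mod_cast (by omega : a < 2 * (a / 2 + 1))
    · rw [hgl']; gcongr; exact_mod_cast (by omega : 2 * (a / 2 + 1) < b)
  simp only [Set.mem_insert_iff, Set.mem_singleton_iff]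
  obtain rfl | rfl : b = a + 1 ∨ b = a + 2 := by omega
  · left; push_cast; ring
  · right; push_cast; ring

theorem stmt13_general (N : ℕ) (σ : Equiv.Perm (Fin N))
    (hσ : Monotone fun i : Fin N => g2 ((σ i : ℕ) + 1)) :
    Set.ncard {d : ℝ | ∃ i j : Fin N, (j : ℕ) = (i : ℕ) + 1 ∧
        d = g2 ((σ j : ℕ) + 1) - g2 ((σ i : ℕ) + 1)} ≤ 2 := by
  set m := Nat.log 2 (N + 1)
  have hlo : 2 ^ m ≤ N + 1 := Nat.pow_log_le_self 2 N.succ_ne_zero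
  have hhi : N + 1 < 2 ^ (m + 1) := Nat.lt_pow_succ_log_self one_lt_two _
  have hsub : {d : ℝ | ∃ i j : Fin N, (j : ℕ) = (i : ℕ) + 1 ∧
      d = g2 ((σ j : ℕ) + 1) - g2 ((σ i : ℕ) + 1)} ⊆
        {1 / 2 ^ (m + 1), 2 / 2 ^ (m + 1)} := by
    rintro d ⟨i, j, hij, rfl⟩
    have hlt : g2 ((σ i : ℕ) + 1) < g2 ((σ j : ℕ) + 1) := by
      refine (hσ (Fin.le_def.2 (by omega))).lt_of_ne fun h ↦ ?_
      have := σ.injective (Fin.ext (by simpa using g2_injective h))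
      omega
    refine g2_sub_mem_of_forall_notMem_Ioo (by omega) (by omega) hlt fun l hl0 hl ⟨h1, h2⟩ ↦
      hσ.ne_of_lt_of_lt_fin hij h1 h2 (σ.symm ⟨l - 1, by omega⟩) ?_
    simp only [Equiv.apply_symm_apply]
    congr
    omega
  exact (Set.ncard_le_ncard hsub (Set.toFinite _)).trans
    ((Set.ncard_insert_le _ _).trans (by simp))

/-- for every `N ≥ 2`, the point set `{x_1,…,x_N}` of the base-2 van der Corput
sequence `x_n = g₂(n)` has at most two distinct gap lengths: for any ordering
`x_{σ(0)+1} ≤ ⋯ ≤ x_{σ(N-1)+1}` of the points, the set of consecutive differences has at most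
two elements. -/
theorem stmt13 (N : ℕ) (hN : 2 ≤ N) (σ : Equiv.Perm (Fin N))
    (hσ : Monotone fun i : Fin N => g2 ((σ i : ℕ) + 1)) :
    Set.ncard {d : ℝ | ∃ i j : Fin N, (j : ℕ) = (i : ℕ) + 1 ∧
        d = g2 ((σ j : ℕ) + 1) - g2 ((σ i : ℕ) + 1)} ≤ 2 :=
  stmt13_general N σ hσ
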